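/- arXiv:2502.08402 — 6 statements merged into one kernel-verified Lean document; each statement's English description precedes it below -/
import Mathlib

section
/- For any ψ₁, ψ₂ ∈ B^Z(𝔻), the product ψ₁′ψ₂′ belongs to A^Z_0(𝔻); that is, sup_{|z|<1} (1−|z|²)|ψ₁′(z)ψ₂′(z)| < ∞ and lim_{t→0} sup_{1−t<|z|<1} (1−|z|²)|ψ₁′(z)ψ₂′(z)| = 0. -/
/-!
If `ψ ∈ B^Z(𝔻)` then `f = ψ′` is a Bloch function: `(1 - |w|) |f′(w)| ≤ C`. Comparing `t ↦ f(tz)`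
with the barrier `|f(0)| - C log(1 - t|z|)` gives `|f(z)| ≤ |f(0)| + C log (1/(1 - |z|))`, hence
`|ψ′(z)| = O((1 - |z|)^(-1/4))`. So `(1 - |z|²) |ψ₁′(z) ψ₂′(z)| = O(√(1 - |z|))`, which is bounded
and tends to `0` as `|z| → 1`.
-/

open Metric

/-- `ψ ∈ B^Z(𝔻)`: holomorphic on the unit disk with
`‖ψ‖_{B^Z} = |ψ′(0)| + sup_{|z|<1} (1−|z|²)|ψ″(z)| < ∞`. -/
def memBZ (ψ : ℂ → ℂ) : Prop :=
  DifferentiableOn ℂ ψ (ball (0:ℂ) 1) ∧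
  ∃ C : ℝ, ∀ z ∈ ball (0:ℂ) 1,
    (1 - ‖z‖ ^ 2) * ‖deriv (deriv ψ) z‖ ≤ C

open Set

section BlochGrowth

variable {E : Type*} [NormedAddCommGroup E] [NormedSpace ℂ E] {f : ℂ → E} {C : ℝ}

theorem norm_le_norm_add_mul_log_of_bloch (hf : DifferentiableOn ℂ f (ball 0 1))
    (hC : ∀ w ∈ ball (0 : ℂ) 1, (1 - ‖w‖) * ‖deriv f w‖ ≤ C) {z : ℂ} (hz : z ∈ ball (0 : ℂ) 1) :
    ‖f z‖ ≤ ‖f 0‖ + C * Real.log (1 - ‖z‖)⁻¹ := by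
  set r := ‖z‖
  have hr : r < 1 := mem_ball_zero_iff.mp hz
  have hpos : ∀ t ∈ Icc (0 : ℝ) 1, 0 < 1 - t * r := fun t ht => by
    nlinarith [ht.1, ht.2, norm_nonneg z]
  have hmem : ∀ t ∈ Icc (0 : ℝ) 1, (t : ℂ) * z ∈ ball (0 : ℂ) 1 := fun t ht => by
    rw [mem_ball_zero_iff, norm_mul, Complex.norm_real, Real.norm_of_nonneg ht.1]
    linarith [hpos t ht]
  have hφ : ∀ t ∈ Icc (0 : ℝ) 1,
      HasDerivAt (fun s : ℝ => f (s * z)) (z • deriv f (t * z)) t := fun t ht =>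
    ((hf.differentiableAt (isOpen_ball.mem_nhds (hmem t ht))).hasDerivAt).scomp t
      (((hasDerivAt_id t).ofReal_comp).mul_const z |>.congr_deriv (by simp))
  have hB : ∀ t ∈ Icc (0 : ℝ) 1, HasDerivAt (fun s : ℝ => ‖f 0‖ - C * Real.log (1 - s * r))
      (C * r / (1 - t * r)) t := fun t ht => by
    refine ((((((hasDerivAt_id t).mul_const r).const_sub 1).log (hpos t ht).ne').const_mul C
      ).const_sub ‖f 0‖).congr_deriv ?_
    simp only [id, one_mul]
    ring
  have key := image_norm_le_of_norm_deriv_right_le_deriv_boundary'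
    (f := fun s : ℝ => f (s * z)) (B := fun s : ℝ => ‖f 0‖ - C * Real.log (1 - s * r))
    (fun t ht => (hφ t ht).continuousAt.continuousWithinAt)
    (fun t ht => (hφ t (Ico_subset_Icc_self ht)).hasDerivWithinAt) (by simp)
    (fun t ht => (hB t ht).continuousAt.continuousWithinAt)
    (fun t ht => (hB t (Ico_subset_Icc_self ht)).hasDerivWithinAt)
    (fun t ht => by
      have ht' := Ico_subset_Icc_self ht
      have h := hC _ (hmem t ht')
      rw [norm_mul, Complex.norm_real, Real.norm_of_nonneg ht'.1] at h
      rw [norm_smul, le_div_iff₀ (hpos t ht')]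
      nlinarith [norm_nonneg z])
    (right_mem_Icc.mpr zero_le_one)
  simpa [Real.log_inv, sub_eq_add_neg] using key

theorem norm_le_mul_rpow_of_bloch (hf : DifferentiableOn ℂ f (ball 0 1))
    (hC : ∀ w ∈ ball (0 : ℂ) 1, (1 - ‖w‖) * ‖deriv f w‖ ≤ C) {z : ℂ} (hz : z ∈ ball (0 : ℂ) 1) :
    ‖f z‖ ≤ (‖f 0‖ + 4 * C) * (1 - ‖z‖) ^ (-(1 / 4) : ℝ) := by
  have hC0 : 0 ≤ C := le_trans (by simp) (hC 0 (mem_ball_self one_pos))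
  set s := 1 - ‖z‖
  have hs : 0 < s := sub_pos.mpr (mem_ball_zero_iff.mp hz)
  have hs1 : s ≤ 1 := sub_le_self 1 (norm_nonneg z)
  have hu : 1 ≤ s ^ (-(1 / 4) : ℝ) :=
    Real.one_le_rpow_of_pos_of_le_one_of_nonpos hs hs1 (by norm_num)
  have hlog : Real.log s⁻¹ ≤ 4 * s ^ (-(1 / 4) : ℝ) := by
    have := Real.log_le_rpow_div (inv_nonneg.mpr hs.le) (ε := 1 / 4) (by norm_num)
    rw [Real.inv_rpow hs.le, ← Real.rpow_neg hs.le, div_eq_mul_inv, mul_comm] at this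
    simpa only [one_div, inv_inv] using this
  calc ‖f z‖ ≤ ‖f 0‖ + C * Real.log s⁻¹ := norm_le_norm_add_mul_log_of_bloch hf hC hz
    _ ≤ ‖f 0‖ * s ^ (-(1 / 4) : ℝ) + C * (4 * s ^ (-(1 / 4) : ℝ)) := by
      gcongr
      exact le_mul_of_one_le_right (norm_nonneg _) hu
    _ = (‖f 0‖ + 4 * C) * s ^ (-(1 / 4) : ℝ) := by ring

end BlochGrowth

section SqrtDecay

variable {α : Type*} [SeminormedAddGroup α] {F : α → ℝ} {K : ℝ}

theorem exists_le_of_le_mul_sqrt_one_sub_norm (hK : 0 ≤ K)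
    (hF : ∀ z ∈ ball (0 : α) 1, F z ≤ K * √(1 - ‖z‖)) :
    ∃ C : ℝ, ∀ z ∈ ball (0 : α) 1, F z ≤ C :=
  ⟨K, fun z hz => (hF z hz).trans <| mul_le_of_le_one_right hK <|
    Real.sqrt_le_one.mpr (sub_le_self 1 (norm_nonneg z))⟩

theorem exists_pos_le_of_le_mul_sqrt_one_sub_norm (hK : 0 ≤ K)
    (hF : ∀ z ∈ ball (0 : α) 1, F z ≤ K * √(1 - ‖z‖)) {ε : ℝ} (hε : 0 < ε) :
    ∃ t : ℝ, 0 < t ∧ ∀ z : α, 1 - t < ‖z‖ → ‖z‖ < 1 → F z ≤ ε := by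
  refine ⟨(ε / (K + 1)) ^ 2, by positivity, fun z hzt hz => ?_⟩
  have hsqrt : √(1 - ‖z‖) ≤ ε / (K + 1) := by
    rw [Real.sqrt_le_left (by positivity)]
    linarith
  calc F z ≤ K * √(1 - ‖z‖) := hF z (mem_ball_zero_iff.mpr hz)
    _ ≤ K * (ε / (K + 1)) := by gcongr
    _ ≤ ε := by
      rw [mul_div_assoc', div_le_iff₀ (by positivity)]
      nlinarith

end SqrtDecay

theorem memBZ.exists_norm_deriv_le {ψ : ℂ → ℂ} (h : memBZ ψ) :
    ∃ D, 0 ≤ D ∧ ∀ z ∈ ball (0 : ℂ) 1, ‖deriv ψ z‖ ≤ D * (1 - ‖z‖) ^ (-(1 / 4) : ℝ) := by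
  obtain ⟨hd, C, hC⟩ := h
  have hC0 : 0 ≤ C := le_trans (by simp) (hC 0 (mem_ball_self one_pos))
  have hbloch : ∀ w ∈ ball (0 : ℂ) 1, (1 - ‖w‖) * ‖deriv (deriv ψ) w‖ ≤ C := fun w hw => by
    have hw1 : ‖w‖ < 1 := mem_ball_zero_iff.mp hw
    refine le_trans ?_ (hC w hw)
    gcongr
    nlinarith [norm_nonneg w]
  exact ⟨‖deriv ψ 0‖ + 4 * C, by positivity, fun z hz =>
    norm_le_mul_rpow_of_bloch (hd.analyticOnNhd isOpen_ball).deriv.differentiableOn hbloch hz⟩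

theorem memBZ.exists_weighted_norm_deriv_mul_le {ψ₁ ψ₂ : ℂ → ℂ} (h₁ : memBZ ψ₁) (h₂ : memBZ ψ₂) :
    ∃ K, 0 ≤ K ∧ ∀ z ∈ ball (0 : ℂ) 1,
      (1 - ‖z‖ ^ 2) * ‖deriv ψ₁ z * deriv ψ₂ z‖ ≤ K * √(1 - ‖z‖) := by
  obtain ⟨D₁, hD₁, hb₁⟩ := h₁.exists_norm_deriv_le
  obtain ⟨D₂, hD₂, hb₂⟩ := h₂.exists_norm_deriv_le
  refine ⟨2 * D₁ * D₂, by positivity, fun z hz => ?_⟩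
  have hz1 : ‖z‖ < 1 := mem_ball_zero_iff.mp hz
  set s := 1 - ‖z‖
  have hs : 0 < s := sub_pos.mpr hz1
  have hsqrt : s * (s ^ (-(1 / 4) : ℝ) * s ^ (-(1 / 4) : ℝ)) = √s := by
    rw [Real.sqrt_eq_rpow, ← Real.rpow_add hs, ← Real.rpow_one_add' hs.le (by norm_num)]
    norm_num
  calc (1 - ‖z‖ ^ 2) * ‖deriv ψ₁ z * deriv ψ₂ z‖
      = s * (1 + ‖z‖) * (‖deriv ψ₁ z‖ * ‖deriv ψ₂ z‖) := by rw [norm_mul]; ring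
    _ ≤ s * 2 * ((D₁ * s ^ (-(1 / 4) : ℝ)) * (D₂ * s ^ (-(1 / 4) : ℝ))) := by
      gcongr
      · linarith
      · exact hb₁ z hz
      · exact hb₂ z hz
    _ = 2 * D₁ * D₂ * √s := by rw [← hsqrt]; ring

/-- for `ψ₁, ψ₂ ∈ B^Z(𝔻)`, the product `ψ₁′ψ₂′` belongs to
`A^Z_0(𝔻)`: its `A^Z`-sup is finite and
`lim_{t→0} sup_{1−t<|z|<1} (1−|z|²)|ψ₁′(z)ψ₂′(z)| = 0`. -/
theorem deriv_mul_deriv_mem_littleAZ (ψ₁ ψ₂ : ℂ → ℂ)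
    (h₁ : memBZ ψ₁) (h₂ : memBZ ψ₂) :
    (∃ C : ℝ, ∀ z ∈ ball (0:ℂ) 1,
      (1 - ‖z‖ ^ 2) * ‖deriv ψ₁ z * deriv ψ₂ z‖ ≤ C) ∧
    (∀ ε : ℝ, 0 < ε → ∃ t : ℝ, 0 < t ∧ ∀ z : ℂ,
      1 - t < ‖z‖ → ‖z‖ < 1 →
        (1 - ‖z‖ ^ 2) * ‖deriv ψ₁ z * deriv ψ₂ z‖ ≤ ε) := by
  obtain ⟨K, hK, hF⟩ := h₁.exists_weighted_norm_deriv_mul_le h₂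
  exact ⟨exists_le_of_le_mul_sqrt_one_sub_norm hK hF,
    fun ε hε => exists_pos_le_of_le_mul_sqrt_one_sub_norm hK hF hε⟩
end

section
/- The map Λ defined by Λ(ψ) = ψ″ − (ψ′)²/2 sends B^Z(𝔻) into A^Z(𝔻): for every ψ ∈ B^Z(𝔻), one has sup_{|z|<1} (1−|z|²)|ψ″(z) − ψ′(z)²/2| < ∞. -/
open Metric

/-!
The bound on `(1 - |z|²) |ψ″|` makes `ψ′` a Bloch function, so integrating along the radius
gives `|ψ′(z)| ≤ |ψ′(0)| + C log (1 / (1 - |z|))`. Since `x log² x` is bounded on `(0, 1]`, the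
weight `1 - |z|²` also tames `|ψ′|²`, and the triangle inequality finishes.
-/

/-- Integrate the bound along the radius `t ↦ t z`: the comparison function
`‖f 0‖ + C * -log (1 - t ‖z‖)` has derivative `C ‖z‖ / (1 - t ‖z‖)`, which dominates
`‖z * f' (t z)‖`. -/
lemma norm_le_norm_zero_add_mul_neg_log {f : ℂ → ℂ} {C : ℝ}
    (hf : DifferentiableOn ℂ f (ball 0 1))
    (hC : ∀ w ∈ ball (0 : ℂ) 1, (1 - ‖w‖) * ‖deriv f w‖ ≤ C)
    {z : ℂ} (hz : z ∈ ball (0 : ℂ) 1) :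
    ‖f z‖ ≤ ‖f 0‖ + C * -Real.log (1 - ‖z‖) := by
  set r := ‖z‖
  have hr : r < 1 := mem_ball_zero_iff.mp hz
  have hpos : ∀ t ∈ Set.Icc (0 : ℝ) 1, 0 < 1 - t * r := fun t ht => by
    nlinarith [ht.2, norm_nonneg z]
  have hmem : ∀ t ∈ Set.Icc (0 : ℝ) 1, (t : ℂ) * z ∈ ball (0 : ℂ) 1 := fun t ht => by
    rw [mem_ball_zero_iff, norm_mul, Complex.norm_real, Real.norm_of_nonneg ht.1]
    linarith [hpos t ht]
  have hcont : ContinuousOn (fun t : ℝ => f (t * z)) (Set.Icc 0 1) :=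
    hf.continuousOn.comp (by fun_prop) hmem
  have hderiv : ∀ t ∈ Set.Ico (0 : ℝ) 1, HasDerivWithinAt (fun t : ℝ => f (t * z))
      (deriv f (t * z) * z) (Set.Ici t) t := fun t ht => by
    have hft := (hf.differentiableAt
      (isOpen_ball.mem_nhds (hmem t (Set.Ico_subset_Icc_self ht)))).hasDerivAt
    exact (hft.comp (t : ℂ) (hasDerivAt_mul_const z)).comp_ofReal.hasDerivWithinAt
  have hB : ContinuousOn (fun t : ℝ => ‖f 0‖ + C * -Real.log (1 - t * r)) (Set.Icc 0 1) :=
    ((ContinuousOn.log (by fun_prop) fun t ht => (hpos t ht).ne').neg.const_smul C).const_add _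
  have hB' : ∀ t ∈ Set.Ico (0 : ℝ) 1,
      HasDerivWithinAt (fun t : ℝ => ‖f 0‖ + C * -Real.log (1 - t * r))
        (C * r / (1 - t * r)) (Set.Ici t) t := fun t ht => by
    have hlog := ((hasDerivAt_mul_const r).const_sub 1).log
      (hpos t (Set.Ico_subset_Icc_self ht)).ne'
    exact ((hlog.neg.const_mul C).const_add ‖f 0‖).hasDerivWithinAt.congr_deriv (by ring)
  have hbound : ∀ t ∈ Set.Ico (0 : ℝ) 1, ‖deriv f (t * z) * z‖ ≤ C * r / (1 - t * r) :=
    fun t ht => by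
    have ht' := Set.Ico_subset_Icc_self ht
    have hCt := hC _ (hmem t ht')
    rw [norm_mul, Complex.norm_real, Real.norm_of_nonneg ht.1] at hCt
    have hle : ‖deriv f (t * z)‖ ≤ C / (1 - t * r) := by
      rw [le_div_iff₀ (hpos t ht')]
      linarith
    rw [norm_mul, mul_div_right_comm]
    exact mul_le_mul_of_nonneg_right hle (norm_nonneg z)
  simpa using image_norm_le_of_norm_deriv_right_le_deriv_boundary' hcont hderiv
    (by simp) hB hB' hbound (Set.right_mem_Icc.mpr zero_le_one)

lemma mul_log_sq_lt_four {x : ℝ} (h0 : 0 < x) (h1 : x ≤ 1) : x * Real.log x ^ 2 < 4 := by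
  have h := Real.abs_log_mul_self_rpow_lt x (1 / 2) h0 h1 one_half_pos
  have hsq : (Real.log x * x ^ (1 / 2 : ℝ)) ^ 2 < 2 ^ 2 :=
    sq_lt_sq' (by linarith [neg_abs_le (Real.log x * x ^ (1 / 2 : ℝ))])
      (by linarith [le_abs_self (Real.log x * x ^ (1 / 2 : ℝ))])
  rw [mul_pow, ← Real.rpow_natCast (x ^ _), ← Real.rpow_mul h0.le] at hsq
  norm_num at hsq
  linarith

lemma one_sub_norm_mul_norm_sq_le {f : ℂ → ℂ} {C : ℝ}
    (hf : DifferentiableOn ℂ f (ball 0 1))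
    (hC : ∀ w ∈ ball (0 : ℂ) 1, (1 - ‖w‖) * ‖deriv f w‖ ≤ C)
    {z : ℂ} (hz : z ∈ ball (0 : ℂ) 1) :
    (1 - ‖z‖) * ‖f z‖ ^ 2 ≤ 2 * ‖f 0‖ ^ 2 + 8 * C ^ 2 := by
  set A := ‖f 0‖
  set L := -Real.log (1 - ‖z‖)
  have hr : 0 < 1 - ‖z‖ := sub_pos.mpr (mem_ball_zero_iff.mp hz)
  have hL : (1 - ‖z‖) * L ^ 2 < 4 := by
    simpa [L] using mul_log_sq_lt_four hr (by linarith [norm_nonneg z])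
  have hgrowth : ‖f z‖ ≤ A + C * L := norm_le_norm_zero_add_mul_neg_log hf hC hz
  have hsq : ‖f z‖ ^ 2 ≤ 2 * A ^ 2 + 2 * C ^ 2 * L ^ 2 :=
    (pow_le_pow_left₀ (norm_nonneg _) hgrowth 2).trans (by nlinarith [sq_nonneg (A - C * L)])
  calc (1 - ‖z‖) * ‖f z‖ ^ 2
      ≤ (1 - ‖z‖) * (2 * A ^ 2 + 2 * C ^ 2 * L ^ 2) := by gcongr
    _ = 2 * (1 - ‖z‖) * A ^ 2 + 2 * C ^ 2 * ((1 - ‖z‖) * L ^ 2) := by ring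
    _ ≤ 2 * A ^ 2 + 8 * C ^ 2 := by
      have hr1 : 1 - ‖z‖ ≤ 1 := by linarith [norm_nonneg z]
      nlinarith [sq_nonneg A, sq_nonneg C]

/-- the map `Λ(ψ) = ψ″ − (ψ′)²/2` sends `B^Z(𝔻)` into `A^Z(𝔻)`:
for every `ψ ∈ B^Z(𝔻)`, `sup_{|z|<1} (1−|z|²)|ψ″(z) − ψ′(z)²/2| < ∞`. -/
theorem lambda_maps_BZ_to_AZ (ψ : ℂ → ℂ) (hψ : memBZ ψ) :
    ∃ C : ℝ, ∀ z ∈ ball (0:ℂ) 1,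
      (1 - ‖z‖ ^ 2) *
        ‖deriv (deriv ψ) z - (deriv ψ z) ^ 2 / 2‖ ≤ C := by
  obtain ⟨hd, C, hC⟩ := hψ
  have hweight : ∀ z ∈ ball (0 : ℂ) 1,
      0 ≤ 1 - ‖z‖ ∧ 1 - ‖z‖ ≤ 1 - ‖z‖ ^ 2 ∧ 1 - ‖z‖ ^ 2 ≤ 2 * (1 - ‖z‖) := fun z hz => by
    have := mem_ball_zero_iff.mp hz
    refine ⟨?_, ?_, ?_⟩ <;> nlinarith [norm_nonneg z]
  have hC' : ∀ w ∈ ball (0 : ℂ) 1, (1 - ‖w‖) * ‖deriv (deriv ψ) w‖ ≤ C := fun w hw =>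
    (mul_le_mul_of_nonneg_right (hweight w hw).2.1 (norm_nonneg _)).trans (hC w hw)
  refine ⟨C + (2 * ‖deriv ψ 0‖ ^ 2 + 8 * C ^ 2), fun z hz => ?_⟩
  obtain ⟨h0, h1, h2⟩ := hweight z hz
  have hsq := one_sub_norm_mul_norm_sq_le (hd.deriv isOpen_ball) hC' hz
  have hnorm : ‖deriv (deriv ψ) z - deriv ψ z ^ 2 / 2‖ ≤
      ‖deriv (deriv ψ) z‖ + ‖deriv ψ z‖ ^ 2 / 2 := by
    refine (norm_sub_le _ _).trans_eq ?_
    rw [norm_div, norm_pow, Complex.norm_ofNat]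
  calc (1 - ‖z‖ ^ 2) * ‖deriv (deriv ψ) z - deriv ψ z ^ 2 / 2‖
      ≤ (1 - ‖z‖ ^ 2) * ‖deriv (deriv ψ) z‖ + (1 - ‖z‖ ^ 2) / 2 * ‖deriv ψ z‖ ^ 2 := by
        nlinarith
    _ ≤ C + (1 - ‖z‖) * ‖deriv ψ z‖ ^ 2 := by
        gcongr
        · exact hC z hz
        · linarith
    _ ≤ C + (2 * ‖deriv ψ 0‖ ^ 2 + 8 * C ^ 2) := by gcongr
end

section
/- The map Λ(ψ) = ψ″ − (ψ′)²/2 sends B^Z_0(𝔻) into A^Z_0(𝔻): for every ψ ∈ B^Z_0(𝔻), one has lim_{t→0} sup_{1−t<|z|<1} (1−|z|²)|ψ″(z) − ψ′(z)²/2| = 0. -/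
open Metric

/-- The little condition on the second derivative:
`lim_{t→0} sup_{1−t<|z|<1} (1−|z|²)|ψ″(z)| = 0`. -/
def littleBZ (ψ : ℂ → ℂ) : Prop :=
  ∀ ε : ℝ, 0 < ε → ∃ t : ℝ, 0 < t ∧ ∀ z : ℂ,
    1 - t < ‖z‖ → ‖z‖ < 1 →
      (1 - ‖z‖ ^ 2) * ‖deriv (deriv ψ) z‖ ≤ ε

/-! Along the radius to `z`, the bound `(1 - |w|) |ψ″(w)| ≤ C` integrates to the Bloch-type
growth `|ψ′(z)| ≤ |ψ′(0)| + C log (1 / (1 - |z|))`. Hence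
`(1 - |z|²) |ψ′(z)|² ≤ 2 (1 - |z|) (|ψ′(0)| + C log (1 / (1 - |z|)))² → 0` as `|z| → 1`,
so the quadratic part of `Λ(ψ)` is negligible near the boundary for every `ψ ∈ B^Z(𝔻)`,
while the little condition controls `ψ″`. -/

open Filter Topology Real

theorem tendsto_mul_sub_mul_log_sq_nhdsGT_zero (A C : ℝ) :
    Tendsto (fun s => s * (A - C * log s) ^ 2) (𝓝[>] 0) (𝓝 0) := by
  -- `s (A - C log s)² = (A √s - C √s log s)²`
  have hsqrt : Tendsto (fun s : ℝ => s ^ (1 / 2 : ℝ)) (𝓝[>] 0) (𝓝 0) := by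
    simpa using ((continuous_rpow_const (by norm_num : (0 : ℝ) ≤ 1 / 2)).tendsto 0).mono_left
      nhdsWithin_le_nhds
  have h : Tendsto (fun s : ℝ => A * s ^ (1 / 2 : ℝ) - C * (log s * s ^ (1 / 2 : ℝ)))
      (𝓝[>] 0) (𝓝 0) := by
    simpa using (hsqrt.const_mul A).sub
      ((tendsto_log_mul_rpow_nhdsGT_zero one_half_pos).const_mul C)
  have h2 := h.pow 2
  rw [zero_pow two_ne_zero] at h2
  refine h2.congr' ?_
  filter_upwards [self_mem_nhdsWithin] with s hs
  have hsq : (s ^ (1 / 2 : ℝ)) ^ 2 = s := by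
    rw [← rpow_mul_natCast (le_of_lt hs)]; norm_num
  linear_combination (A - C * log s) ^ 2 * hsq

theorem norm_le_sub_mul_log_of_norm_deriv_le {E : Type*} [NormedAddCommGroup E]
    [NormedSpace ℂ E] {g : ℂ → E} {C : ℝ} (hg : DifferentiableOn ℂ g (ball 0 1))
    (hC : ∀ w ∈ ball (0 : ℂ) 1, (1 - ‖w‖) * ‖deriv g w‖ ≤ C) {z : ℂ} (hz : ‖z‖ < 1) :
    ‖g z‖ ≤ ‖g 0‖ - C * log (1 - ‖z‖) := by
  set r := ‖z‖
  have hnorm : ∀ t ∈ Set.Icc (0 : ℝ) 1, ‖(t : ℂ) * z‖ = t * r := fun t ht => by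
    rw [norm_mul, Complex.norm_real, Real.norm_of_nonneg ht.1]
  have hpos : ∀ t ∈ Set.Icc (0 : ℝ) 1, 0 < 1 - t * r := fun t ht => by
    nlinarith [ht.1, ht.2, norm_nonneg z]
  have hmem : ∀ t ∈ Set.Icc (0 : ℝ) 1, (t : ℂ) * z ∈ ball (0 : ℂ) 1 := fun t ht => by
    rw [mem_ball_zero_iff, hnorm t ht]; linarith [hpos t ht]
  have hpath : ∀ t ∈ Set.Icc (0 : ℝ) 1,
      HasDerivAt (fun t : ℝ => g (t * z)) (z • deriv g (t * z)) t := fun t ht => by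
    have hg' := (hg.differentiableAt (isOpen_ball.mem_nhds (hmem t ht))).hasDerivAt
    have hline : HasDerivAt (fun t : ℝ => (t : ℂ) * z) z t := by
      simpa using (hasDerivAt_id t).ofReal_comp.mul_const z
    exact hg'.scomp t hline
  have hbarrier : ∀ t ∈ Set.Icc (0 : ℝ) 1,
      HasDerivAt (fun t => ‖g 0‖ - C * log (1 - t * r)) (r * C / (1 - t * r)) t := fun t ht => by
    have hu : HasDerivAt (fun t : ℝ => 1 - t * r) (-r) t := by
      simpa using ((hasDerivAt_id t).mul_const r).const_sub 1
    exact (((hu.log (hpos t ht).ne').const_mul C).const_sub ‖g 0‖).congr_deriv (by ring)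
  have hbound : ∀ t ∈ Set.Ico (0 : ℝ) 1, ‖z • deriv g (t * z)‖ ≤ r * C / (1 - t * r) :=
    fun t ht => by
    have ht' := Set.Ico_subset_Icc_self ht
    have hw := hC _ (hmem t ht')
    rw [hnorm t ht'] at hw
    rw [norm_smul, mul_div_assoc]
    exact mul_le_mul_of_nonneg_left ((le_div_iff₀' (hpos t ht')).2 hw) (norm_nonneg z)
  simpa using image_norm_le_of_norm_deriv_right_le_deriv_boundary'
    (fun t ht => (hpath t ht).continuousAt.continuousWithinAt)
    (fun t ht => (hpath t (Set.Ico_subset_Icc_self ht)).hasDerivWithinAt) (by simp)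
    (fun t ht => (hbarrier t ht).continuousAt.continuousWithinAt)
    (fun t ht => (hbarrier t (Set.Ico_subset_Icc_self ht)).hasDerivWithinAt) hbound
    (Set.right_mem_Icc.2 zero_le_one)

theorem memBZ.exists_weighted_sq_deriv_le {ψ : ℂ → ℂ} (hψ : memBZ ψ) {ε : ℝ} (hε : 0 < ε) :
    ∃ t : ℝ, 0 < t ∧ ∀ z : ℂ, 1 - t < ‖z‖ → ‖z‖ < 1 →
      (1 - ‖z‖ ^ 2) * ‖deriv ψ z ^ 2 / 2‖ ≤ ε := by
  obtain ⟨hd, C, hC⟩ := hψ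
  have hgrowth : ∀ z : ℂ, ‖z‖ < 1 → ‖deriv ψ z‖ ≤ ‖deriv ψ 0‖ - C * log (1 - ‖z‖) := by
    refine fun z hz => norm_le_sub_mul_log_of_norm_deriv_le (hd.deriv isOpen_ball)
      (fun w hw => le_trans ?_ (hC w hw)) hz
    have hw1 : ‖w‖ ≤ 1 := (mem_ball_zero_iff.1 hw).le
    gcongr
    nlinarith [norm_nonneg w]
  obtain ⟨t, ht, hsmall⟩ := mem_nhdsGT_iff_exists_Ioo_subset.1
    ((tendsto_order.1 (tendsto_mul_sub_mul_log_sq_nhdsGT_zero ‖deriv ψ 0‖ C)).2 ε hε)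
  refine ⟨t, ht, fun z hzt hz1 => ?_⟩
  have hnear : (1 - ‖z‖) * (‖deriv ψ 0‖ - C * log (1 - ‖z‖)) ^ 2 < ε :=
    hsmall ⟨sub_pos.2 hz1, by linarith⟩
  calc (1 - ‖z‖ ^ 2) * ‖deriv ψ z ^ 2 / 2‖
      = (1 + ‖z‖) / 2 * (1 - ‖z‖) * ‖deriv ψ z‖ ^ 2 := by
        rw [norm_div, norm_pow, Complex.norm_ofNat]; ring
    _ ≤ 1 * (1 - ‖z‖) * (‖deriv ψ 0‖ - C * log (1 - ‖z‖)) ^ 2 := by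
        gcongr
        · linarith
        · exact hgrowth z hz1
    _ ≤ ε := by linarith

/-- `Λ(ψ) = ψ″ − (ψ′)²/2` sends `B^Z_0(𝔻)` into `A^Z_0(𝔻)`:
for every `ψ ∈ B^Z_0(𝔻)`,
`lim_{t→0} sup_{1−t<|z|<1} (1−|z|²)|ψ″(z) − ψ′(z)²/2| = 0`. -/
theorem lambda_maps_littleBZ_to_littleAZ (ψ : ℂ → ℂ)
    (hψ : memBZ ψ) (hψ0 : littleBZ ψ) :
    ∀ ε : ℝ, 0 < ε → ∃ t : ℝ, 0 < t ∧ ∀ z : ℂ,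
      1 - t < ‖z‖ → ‖z‖ < 1 →
        (1 - ‖z‖ ^ 2) *
          ‖deriv (deriv ψ) z - (deriv ψ z) ^ 2 / 2‖ ≤ ε := by
  intro ε hε
  obtain ⟨t₁, ht₁, h₁⟩ := hψ0 (ε / 2) (half_pos hε)
  obtain ⟨t₂, ht₂, h₂⟩ := hψ.exists_weighted_sq_deriv_le (half_pos hε)
  refine ⟨min t₁ t₂, lt_min ht₁ ht₂, fun z hzt hz1 => ?_⟩
  have hweight : 0 ≤ 1 - ‖z‖ ^ 2 := by nlinarith [norm_nonneg z]
  calc (1 - ‖z‖ ^ 2) * ‖deriv (deriv ψ) z - deriv ψ z ^ 2 / 2‖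
      ≤ (1 - ‖z‖ ^ 2) * ‖deriv (deriv ψ) z‖ + (1 - ‖z‖ ^ 2) * ‖deriv ψ z ^ 2 / 2‖ := by
        rw [← mul_add]; exact mul_le_mul_of_nonneg_left (norm_sub_le _ _) hweight
    _ ≤ ε / 2 + ε / 2 := add_le_add
        (h₁ z (lt_of_le_of_lt (by gcongr; exact min_le_left _ _) hzt) hz1)
        (h₂ z (lt_of_le_of_lt (by gcongr; exact min_le_right _ _) hzt) hz1)
    _ = ε := add_halves ε
end

section
/- If ψ₁, ψ₂ ∈ B^Z(𝔻) satisfy ψ₁ − ψ₂ ∈ B^Z_0(𝔻), then Λ(ψ₁) − Λ(ψ₂) ∈ A^Z_0(𝔻), where Λ(ψ) = ψ″ − (ψ′)²/2. -/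
open Metric

/-- `φ ∈ A^Z_0(𝔻)`: finite `A^Z`-sup together with the vanishing condition
`lim_{t→0} sup_{1−t<|z|<1} (1−|z|²)|φ(z)| = 0`. -/
def memLittleAZ (φ : ℂ → ℂ) : Prop :=
  (∃ C : ℝ, ∀ z ∈ ball (0:ℂ) 1,
    (1 - ‖z‖ ^ 2) * ‖φ z‖ ≤ C) ∧
  (∀ ε : ℝ, 0 < ε → ∃ t : ℝ, 0 < t ∧ ∀ z : ℂ,
    1 - t < ‖z‖ → ‖z‖ < 1 →
      (1 - ‖z‖ ^ 2) * ‖φ z‖ ≤ ε)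

/-- `Λ(ψ) = ψ″ − (ψ′)²/2`. -/
noncomputable def lambdaMap (ψ : ℂ → ℂ) : ℂ → ℂ :=
  fun z => deriv (deriv ψ) z - (deriv ψ z) ^ 2 / 2

/-!
Write `g = ψ₁ − ψ₂`. Then `Λ(ψ₁) − Λ(ψ₂) = g″ − g′ (ψ₁′ + ψ₂′) / 2`. The first term is small near the
circle because `g ∈ B^Z_0`. For the second, integrating `(1 − |w|²)|F′(w)| ≤ C` along `[0, z]` gives the
Bloch growth `|F(z)| ≤ |F(0)| + C log (1 / (1 − |z|)) ≤ K (1 − |z|)^{−1/4}` for `F = ψ′` with `ψ ∈ B^Z`, so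
`(1 − |z|²)|g′(z)||ψ₁′(z) + ψ₂′(z)| = O((1 − |z|)^{1/2})`.
-/

open Set

/-- `littleBZ ψ` and the second half of `memLittleAZ φ` are this condition for the weighted norms
`(1 - ‖z‖ ^ 2) * ‖ψ″ z‖` and `(1 - ‖z‖ ^ 2) * ‖φ z‖`. -/
def VanishesAtUnitCircle (f : ℂ → ℝ) : Prop :=
  ∀ ε : ℝ, 0 < ε → ∃ t : ℝ, 0 < t ∧ ∀ z : ℂ, 1 - t < ‖z‖ → ‖z‖ < 1 → f z ≤ ε

namespace VanishesAtUnitCircle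

variable {f g : ℂ → ℝ}

theorem add (hf : VanishesAtUnitCircle f) (hg : VanishesAtUnitCircle g) :
    VanishesAtUnitCircle (f + g) := by
  intro ε hε
  obtain ⟨t₁, ht₁, hf⟩ := hf (ε / 2) (half_pos hε)
  obtain ⟨t₂, ht₂, hg⟩ := hg (ε / 2) (half_pos hε)
  refine ⟨min t₁ t₂, lt_min ht₁ ht₂, fun z hz hz1 => ?_⟩
  have h₁ := hf z (by linarith [min_le_left t₁ t₂]) hz1
  have h₂ := hg z (by linarith [min_le_right t₁ t₂]) hz1
  simp only [Pi.add_apply]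
  linarith

theorem mono (hg : VanishesAtUnitCircle g) (hfg : ∀ z ∈ ball (0 : ℂ) 1, f z ≤ g z) :
    VanishesAtUnitCircle f := by
  intro ε hε
  obtain ⟨t, ht, hg⟩ := hg ε hε
  exact ⟨t, ht, fun z hz hz1 => (hfg z (mem_ball_zero_iff.2 hz1)).trans (hg z hz hz1)⟩

end VanishesAtUnitCircle

theorem vanishesAtUnitCircle_mul_sqrt (M : ℝ) :
    VanishesAtUnitCircle (fun z => M * √(1 - ‖z‖)) := by
  intro ε hε
  set δ := ε / (|M| + 1)
  have hδ : 0 < δ := by positivity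
  refine ⟨δ ^ 2, by positivity, fun z hz _ => ?_⟩
  have hsqrt : √(1 - ‖z‖) ≤ δ := by
    rw [← Real.sqrt_sq hδ.le]
    exact Real.sqrt_le_sqrt (by linarith)
  calc M * √(1 - ‖z‖) ≤ |M| * δ :=
        mul_le_mul (le_abs_self M) hsqrt (Real.sqrt_nonneg _) (abs_nonneg M)
    _ ≤ (|M| + 1) * δ := by gcongr; linarith
    _ = ε := by simp only [δ]; field_simp

theorem weighted_bound_nonneg {F : ℂ → ℂ} {C : ℝ}
    (hC : ∀ z ∈ ball (0 : ℂ) 1, (1 - ‖z‖ ^ 2) * ‖F z‖ ≤ C) : 0 ≤ C := by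
  simpa using (norm_nonneg (F 0)).trans (by simpa using hC 0 (mem_ball_self one_pos))

theorem norm_le_add_mul_neg_log_of_weighted_deriv_le {F : ℂ → ℂ} {C : ℝ}
    (hF : DifferentiableOn ℂ F (ball 0 1))
    (hC : ∀ z ∈ ball (0 : ℂ) 1, (1 - ‖z‖ ^ 2) * ‖deriv F z‖ ≤ C) {z : ℂ} (hz : z ∈ ball (0 : ℂ) 1) :
    ‖F z‖ ≤ ‖F 0‖ + C * -Real.log (1 - ‖z‖) := by
  set r := ‖z‖
  have hr : r < 1 := mem_ball_zero_iff.1 hz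
  have hnorm : ∀ t ∈ Icc (0 : ℝ) 1, ‖(t : ℂ) * z‖ = t * r := fun t ht => by
    rw [norm_mul, Complex.norm_real, Real.norm_of_nonneg ht.1]
  have htr : ∀ t ∈ Icc (0 : ℝ) 1, t * r < 1 := fun t ht =>
    (mul_le_of_le_one_left (norm_nonneg z) ht.2).trans_lt hr
  have hseg : ∀ t ∈ Icc (0 : ℝ) 1, (t : ℂ) * z ∈ ball (0 : ℂ) 1 := fun t ht =>
    mem_ball_zero_iff.2 ((hnorm t ht).trans_lt (htr t ht))
  have hf : ∀ t ∈ Icc (0 : ℝ) 1,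
      HasDerivAt (fun t : ℝ => F (t * z)) (deriv F (t * z) * z) t := fun t ht => by
    have hFt := (hF.differentiableAt (isOpen_ball.mem_nhds (hseg t ht))).hasDerivAt
    simpa using (hFt.comp (t : ℂ) (hasDerivAt_mul_const z)).comp_ofReal
  have hB : ∀ t ∈ Icc (0 : ℝ) 1, HasDerivAt (fun t => ‖F 0‖ + C * -Real.log (1 - t * r))
      (C * (r / (1 - t * r))) t := fun t ht => by
    have hlog := ((hasDerivAt_mul_const r).const_sub 1).log (sub_pos.2 (htr t ht)).ne'
    exact ((hlog.neg.const_mul C).const_add ‖F 0‖).congr_deriv (by ring)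
  have hbound : ∀ t ∈ Icc (0 : ℝ) 1, ‖deriv F (t * z) * z‖ ≤ C * (r / (1 - t * r)) := by
    intro t ht
    have hpos : 0 < 1 - t * r := sub_pos.2 (htr t ht)
    have htr0 : 0 ≤ t * r := mul_nonneg ht.1 (norm_nonneg z)
    have hw : (1 - t * r) * ‖deriv F (t * z)‖ ≤ C := by
      refine le_trans ?_ (hnorm t ht ▸ hC _ (hseg t ht))
      gcongr
      nlinarith [htr t ht]
    rw [norm_mul, mul_div_assoc', le_div_iff₀ hpos, mul_right_comm]
    exact mul_le_mul_of_nonneg_right (by linarith) (norm_nonneg z)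
  have := image_norm_le_of_norm_deriv_right_le_deriv_boundary'
    (fun t ht => (hf t ht).continuousAt.continuousWithinAt)
    (fun t ht => (hf t (Ico_subset_Icc_self ht)).hasDerivWithinAt) (by simp)
    (fun t ht => (hB t ht).continuousAt.continuousWithinAt)
    (fun t ht => (hB t (Ico_subset_Icc_self ht)).hasDerivWithinAt)
    (fun t ht => hbound t (Ico_subset_Icc_self ht)) (right_mem_Icc.2 zero_le_one)
  simpa using this

theorem norm_mul_rpow_le_of_weighted_deriv_le {F : ℂ → ℂ} {C : ℝ}
    (hF : DifferentiableOn ℂ F (ball 0 1))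
    (hC : ∀ z ∈ ball (0 : ℂ) 1, (1 - ‖z‖ ^ 2) * ‖deriv F z‖ ≤ C) {z : ℂ} (hz : z ∈ ball (0 : ℂ) 1) :
    ‖F z‖ * (1 - ‖z‖) ^ (1 / 4 : ℝ) ≤ ‖F 0‖ + 4 * C := by
  have hC0 := weighted_bound_nonneg hC
  set s := 1 - ‖z‖
  have hs : 0 < s := sub_pos.2 (mem_ball_zero_iff.1 hz)
  have hs1 : s ≤ 1 := sub_le_self 1 (norm_nonneg z)
  have hq1 : s ^ (1 / 4 : ℝ) ≤ 1 := Real.rpow_le_one hs.le hs1 (by norm_num)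
  have hlog : -Real.log s * s ^ (1 / 4 : ℝ) ≤ 4 := by
    have := Real.abs_log_mul_self_rpow_lt s (1 / 4) hs hs1 (by norm_num)
    rw [neg_mul]
    linarith [neg_abs_le (Real.log s * s ^ (1 / 4 : ℝ))]
  calc ‖F z‖ * s ^ (1 / 4 : ℝ)
      ≤ (‖F 0‖ + C * -Real.log s) * s ^ (1 / 4 : ℝ) := by
        gcongr
        exact norm_le_add_mul_neg_log_of_weighted_deriv_le hF hC hz
    _ = ‖F 0‖ * s ^ (1 / 4 : ℝ) + C * (-Real.log s * s ^ (1 / 4 : ℝ)) := by ring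
    _ ≤ ‖F 0‖ + 4 * C := by
        have := mul_le_mul_of_nonneg_left hlog hC0
        have := mul_le_of_le_one_right (norm_nonneg (F 0)) hq1
        linarith

theorem memBZ.exists_norm_deriv_mul_rpow_le {ψ : ℂ → ℂ} (hψ : memBZ ψ) :
    ∃ K, ∀ z ∈ ball (0 : ℂ) 1, ‖deriv ψ z‖ * (1 - ‖z‖) ^ (1 / 4 : ℝ) ≤ K := by
  obtain ⟨hd, C, hC⟩ := hψ
  exact ⟨_, fun z hz => norm_mul_rpow_le_of_weighted_deriv_le (hd.deriv isOpen_ball) hC hz⟩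

theorem lambdaMap_sub_lambdaMap {U : Set ℂ} (hU : IsOpen U) {ψ₁ ψ₂ : ℂ → ℂ}
    (h₁ : DifferentiableOn ℂ ψ₁ U) (h₂ : DifferentiableOn ℂ ψ₂ U) {z : ℂ} (hz : z ∈ U) :
    lambdaMap ψ₁ z - lambdaMap ψ₂ z =
      deriv (deriv fun w => ψ₁ w - ψ₂ w) z -
        deriv (fun w => ψ₁ w - ψ₂ w) z * (deriv ψ₁ z + deriv ψ₂ z) / 2 := by
  have hderiv : ∀ w ∈ U, deriv (fun w => ψ₁ w - ψ₂ w) w = deriv ψ₁ w - deriv ψ₂ w := fun w hw =>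
    deriv_sub (h₁.differentiableAt (hU.mem_nhds hw)) (h₂.differentiableAt (hU.mem_nhds hw))
  have hderiv2 : deriv (deriv fun w => ψ₁ w - ψ₂ w) z = deriv (deriv ψ₁) z - deriv (deriv ψ₂) z := by
    rw [Filter.EventuallyEq.deriv_eq (Filter.eventually_of_mem (hU.mem_nhds hz) hderiv)]
    exact deriv_sub ((h₁.deriv hU).differentiableAt (hU.mem_nhds hz))
      ((h₂.deriv hU).differentiableAt (hU.mem_nhds hz))
  rw [hderiv2, hderiv z hz, lambdaMap, lambdaMap]
  ring

theorem mul_mul_le_mul_sqrt {s a b A B : ℝ} (hs : 0 ≤ s) (ha : 0 ≤ a) (hb : 0 ≤ b)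
    (hA : a * s ^ (1 / 4 : ℝ) ≤ A) (hB : b * s ^ (1 / 4 : ℝ) ≤ B) : s * (a * b) ≤ A * B * √s := by
  have hsplit : s = √s * (s ^ (1 / 4 : ℝ) * s ^ (1 / 4 : ℝ)) := by
    rw [← Real.rpow_add' hs (by norm_num), Real.sqrt_eq_rpow, ← Real.rpow_add' hs (by norm_num)]
    norm_num
  calc s * (a * b) = (a * s ^ (1 / 4 : ℝ)) * (b * s ^ (1 / 4 : ℝ)) * √s := by
        nth_rw 1 [hsplit]; ring
    _ ≤ A * B * √s := by
        have hq : 0 ≤ s ^ (1 / 4 : ℝ) := Real.rpow_nonneg hs _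
        gcongr
        exact (mul_nonneg ha hq).trans hA

theorem exists_weighted_norm_lambdaMap_sub_le {ψ₁ ψ₂ : ℂ → ℂ} (h₁ : memBZ ψ₁) (h₂ : memBZ ψ₂)
    (hg : memBZ fun z => ψ₁ z - ψ₂ z) :
    ∃ M, ∀ z ∈ ball (0 : ℂ) 1, (1 - ‖z‖ ^ 2) * ‖lambdaMap ψ₁ z - lambdaMap ψ₂ z‖ ≤
      (1 - ‖z‖ ^ 2) * ‖deriv (deriv fun w => ψ₁ w - ψ₂ w) z‖ + M * √(1 - ‖z‖) := by
  obtain ⟨K₁, hK₁⟩ := h₁.exists_norm_deriv_mul_rpow_le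
  obtain ⟨K₂, hK₂⟩ := h₂.exists_norm_deriv_mul_rpow_le
  obtain ⟨Kg, hKg⟩ := hg.exists_norm_deriv_mul_rpow_le
  refine ⟨Kg * (K₁ + K₂), fun z hz => ?_⟩
  set g := fun w => ψ₁ w - ψ₂ w
  have hr0 : 0 ≤ ‖z‖ := norm_nonneg z
  have hr1 : ‖z‖ < 1 := mem_ball_zero_iff.1 hz
  have hweight : 0 ≤ 1 - ‖z‖ ^ 2 := by nlinarith
  have htri : ‖lambdaMap ψ₁ z - lambdaMap ψ₂ z‖ ≤
      ‖deriv (deriv g) z‖ + ‖deriv g z‖ * (‖deriv ψ₁ z‖ + ‖deriv ψ₂ z‖) / 2 := by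
    rw [lambdaMap_sub_lambdaMap isOpen_ball h₁.1 h₂.1 hz]
    refine (norm_sub_le _ _).trans ?_
    rw [norm_div, norm_mul, Complex.norm_two]
    gcongr
    exact norm_add_le _ _
  have hprod : (1 - ‖z‖) * (‖deriv g z‖ * (‖deriv ψ₁ z‖ + ‖deriv ψ₂ z‖)) ≤
      Kg * (K₁ + K₂) * √(1 - ‖z‖) := by
    refine mul_mul_le_mul_sqrt (by linarith) (norm_nonneg _) (by positivity) (hKg z hz) ?_
    rw [add_mul]
    exact add_le_add (hK₁ z hz) (hK₂ z hz)
  calc (1 - ‖z‖ ^ 2) * ‖lambdaMap ψ₁ z - lambdaMap ψ₂ z‖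
      ≤ (1 - ‖z‖ ^ 2) * ‖deriv (deriv g) z‖ +
          (1 - ‖z‖ ^ 2) / 2 * (‖deriv g z‖ * (‖deriv ψ₁ z‖ + ‖deriv ψ₂ z‖)) := by
        linarith [mul_le_mul_of_nonneg_left htri hweight]
    _ ≤ (1 - ‖z‖ ^ 2) * ‖deriv (deriv g) z‖ + Kg * (K₁ + K₂) * √(1 - ‖z‖) := by
        have hhalf : (1 - ‖z‖ ^ 2) / 2 ≤ 1 - ‖z‖ := by nlinarith
        have := mul_le_mul_of_nonneg_right hhalf (by positivity :
          0 ≤ ‖deriv g z‖ * (‖deriv ψ₁ z‖ + ‖deriv ψ₂ z‖))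
        linarith

/-- if `ψ₁, ψ₂ ∈ B^Z(𝔻)` and `ψ₁ − ψ₂ ∈ B^Z_0(𝔻)`, then
`Λ(ψ₁) − Λ(ψ₂) ∈ A^Z_0(𝔻)`. -/
theorem lambda_diff_mem_littleAZ (ψ₁ ψ₂ : ℂ → ℂ)
    (h₁ : memBZ ψ₁) (h₂ : memBZ ψ₂)
    (hdiff : memBZ (fun z => ψ₁ z - ψ₂ z) ∧ littleBZ (fun z => ψ₁ z - ψ₂ z)) :
    memLittleAZ (fun z => lambdaMap ψ₁ z - lambdaMap ψ₂ z) := by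
  obtain ⟨hg, hg_little⟩ := hdiff
  obtain ⟨M, hM⟩ := exists_weighted_norm_lambdaMap_sub_le h₁ h₂ hg
  obtain ⟨-, Cg, hCg⟩ := hg
  refine ⟨⟨Cg + |M|, fun z hz => ?_⟩,
    (VanishesAtUnitCircle.add hg_little (vanishesAtUnitCircle_mul_sqrt M)).mono hM⟩
  have hsqrt : √(1 - ‖z‖) ≤ 1 := Real.sqrt_le_one.2 (sub_le_self 1 (norm_nonneg z))
  have hMsqrt : M * √(1 - ‖z‖) ≤ |M| :=
    (mul_le_mul (le_abs_self M) hsqrt (Real.sqrt_nonneg _) (abs_nonneg M)).trans_eq (mul_one _)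
  linarith [hM z hz, hCg z hz]
end

section
/- If φ ∈ B^Z(𝔻) and ψ ∈ B^Z_0(𝔻), then the function ψ″ − φ′ψ′ belongs to A^Z_0(𝔻); that is, sup_{|z|<1} (1−|z|²)|ψ″(z) − φ′(z)ψ′(z)| < ∞ and lim_{t→0} sup_{1−t<|z|<1} (1−|z|²)|ψ″(z) − φ′(z)ψ′(z)| = 0. (This is the assertion that the derivative of Λ at φ in the direction ψ, namely d_φΛ(ψ) = ψ″ − φ′ψ′, maps B^Z_0(𝔻) into A^Z_0(𝔻).) -/
open Metric

/-!
Integrating the bound `(1 - |w|) |f″(w)| ≤ C` along the radius gives the logarithmic growth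
`|f′(z)| ≤ |f′(0)| + C log (1 / (1 - |z|))` for `f ∈ B^Z`, so `(1 - |z|)^{1/4} |f′(z)|` is bounded.
Hence `(1 - |z|²) |φ′ψ′| ≤ 2 (1 - |z|)^{1/2} · O(1)` tends to `0` at the unit circle, while
`(1 - |z|²) |ψ″|` does so because `ψ ∈ B^Z_0`.
-/

open Set

theorem norm_sub_le_mul_neg_log_of_norm_deriv_le {E : Type*} [NormedAddCommGroup E]
    [NormedSpace ℂ E] {f : ℂ → E} {C : ℝ} (hf : DifferentiableOn ℂ f (ball 0 1))
    (hC : ∀ w ∈ ball (0 : ℂ) 1, (1 - ‖w‖) * ‖deriv f w‖ ≤ C) {z : ℂ} (hz : z ∈ ball (0 : ℂ) 1) :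
    ‖f z - f 0‖ ≤ C * -Real.log (1 - ‖z‖) := by
  -- Compare `t ↦ f (t z) - f 0` on `[0, 1]` with `t ↦ -C log (1 - t ‖z‖)`.
  set r := ‖z‖
  have hr1 : r < 1 := mem_ball_zero_iff.mp hz
  have hr0 : 0 ≤ r := norm_nonneg z
  have hnorm : ∀ t ∈ Icc (0 : ℝ) 1, ‖(t : ℂ) * z‖ = t * r := fun t ht => by
    rw [norm_mul, Complex.norm_real, Real.norm_of_nonneg ht.1]
  have hpos : ∀ t ∈ Icc (0 : ℝ) 1, 0 < 1 - t * r := fun t ht => by nlinarith [ht.2]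
  have hmem : ∀ t ∈ Icc (0 : ℝ) 1, (t : ℂ) * z ∈ ball (0 : ℂ) 1 := fun t ht => by
    rw [mem_ball_zero_iff, hnorm t ht]; linarith [hpos t ht]
  have hg : ∀ t ∈ Icc (0 : ℝ) 1, HasDerivAt (fun s : ℝ => f ((s : ℂ) * z) - f 0)
      (z • deriv f ((t : ℂ) * z)) t := fun t ht => by
    have hline : HasDerivAt (fun s : ℝ => (s : ℂ) * z) z t := by
      simpa using ((hasDerivAt_id (t : ℂ)).mul_const z).comp_ofReal
    exact (((hf.differentiableAt (isOpen_ball.mem_nhds (hmem t ht))).hasDerivAt).scomp t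
      hline).sub_const (f 0)
  have hB : ∀ t ∈ Icc (0 : ℝ) 1, HasDerivAt (fun s : ℝ => -C * Real.log (1 - s * r))
      (C * r / (1 - t * r)) t := fun t ht => by
    have hlin : HasDerivAt (fun s : ℝ => 1 - s * r) (-r) t := by
      simpa using ((hasDerivAt_id t).mul_const r).const_sub 1
    exact (((Real.hasDerivAt_log (hpos t ht).ne').comp t hlin).const_mul (-C)).congr_deriv
      (by ring)
  have hbound : ∀ t ∈ Ico (0 : ℝ) 1, ‖z • deriv f ((t : ℂ) * z)‖ ≤ C * r / (1 - t * r) :=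
    fun t ht => by
    have ht' := Ico_subset_Icc_self ht
    have h := hC _ (hmem t ht')
    rw [hnorm t ht'] at h
    rw [norm_smul, le_div_iff₀ (hpos t ht')]
    nlinarith [mul_le_mul_of_nonneg_left h hr0]
  simpa using image_norm_le_of_norm_deriv_right_le_deriv_boundary'
    (fun t ht => (hg t ht).continuousAt.continuousWithinAt)
    (fun t ht => (hg t (Ico_subset_Icc_self ht)).hasDerivWithinAt) (by simp)
    (fun t ht => (hB t ht).continuousAt.continuousWithinAt)
    (fun t ht => (hB t (Ico_subset_Icc_self ht)).hasDerivWithinAt) hbound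
    (right_mem_Icc.2 zero_le_one)

theorem sqrt_sqrt_mul_neg_log_le (s : ℝ) : √√s * -Real.log s ≤ 4 := by
  rcases le_or_gt s 0 with hs | hs
  · simp [Real.sqrt_eq_zero_of_nonpos hs]
  set u := √√s
  have hu : 0 < u := Real.sqrt_pos.2 (Real.sqrt_pos.2 hs)
  have hsu : s = u ^ 4 := by
    rw [show u ^ 4 = (u ^ 2) ^ 2 by ring, Real.sq_sqrt (Real.sqrt_nonneg s), Real.sq_sqrt hs.le]
  have hlog : -u⁻¹ ≤ Real.log u := Real.neg_inv_le_log hu.le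
  rw [hsu, Real.log_pow, Nat.cast_ofNat]
  have hu_inv : u * u⁻¹ = 1 := mul_inv_cancel₀ hu.ne'
  nlinarith

theorem one_sub_sq_mul_mul_le {r a b : ℝ} (hr : r ≤ 1) (ha : 0 ≤ a) (hb : 0 ≤ b) :
    (1 - r ^ 2) * (a * b) ≤ 2 * √(1 - r) * ((√√(1 - r) * a) * (√√(1 - r) * b)) := by
  have hs : 0 ≤ 1 - r := by linarith
  have hu : √√(1 - r) * √√(1 - r) = √(1 - r) := Real.mul_self_sqrt (Real.sqrt_nonneg _)
  calc (1 - r ^ 2) * (a * b) ≤ 2 * (1 - r) * (a * b) := by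
        gcongr; nlinarith [sq_nonneg (1 - r)]
    _ = 2 * (√(1 - r) * √(1 - r)) * (a * b) := by rw [Real.mul_self_sqrt hs]
    _ = 2 * √(1 - r) * ((√√(1 - r) * √√(1 - r)) * (a * b)) := by rw [hu]; ring
    _ = 2 * √(1 - r) * ((√√(1 - r) * a) * (√√(1 - r) * b)) := by ring

theorem one_sub_sq_mul_norm_sub_mul_le {R : Type*} [NormedRing R] {r Ka Kb : ℝ} {a b c : R}
    (hr0 : 0 ≤ r) (hr1 : r ≤ 1) (ha : √√(1 - r) * ‖a‖ ≤ Ka) (hb : √√(1 - r) * ‖b‖ ≤ Kb) :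
    (1 - r ^ 2) * ‖c - a * b‖ ≤ (1 - r ^ 2) * ‖c‖ + √(1 - r) * (2 * (Ka * Kb)) := by
  have hw : 0 ≤ 1 - r ^ 2 := by nlinarith
  calc (1 - r ^ 2) * ‖c - a * b‖ ≤ (1 - r ^ 2) * ‖c‖ + (1 - r ^ 2) * (‖a‖ * ‖b‖) := by
        rw [← mul_add]
        gcongr
        exact (norm_sub_le _ _).trans (add_le_add le_rfl (norm_mul_le a b))
    _ ≤ (1 - r ^ 2) * ‖c‖ + 2 * √(1 - r) * ((√√(1 - r) * ‖a‖) * (√√(1 - r) * ‖b‖)) :=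
        add_le_add le_rfl (one_sub_sq_mul_mul_le hr1 (norm_nonneg a) (norm_nonneg b))
    _ ≤ (1 - r ^ 2) * ‖c‖ + 2 * √(1 - r) * (Ka * Kb) := by
        gcongr
        exact (mul_nonneg (Real.sqrt_nonneg _) (norm_nonneg a)).trans ha
    _ = (1 - r ^ 2) * ‖c‖ + √(1 - r) * (2 * (Ka * Kb)) := by ring

theorem memBZ.exists_sqrt_sqrt_mul_norm_deriv_le {f : ℂ → ℂ} (hf : memBZ f) :
    ∃ K, 0 ≤ K ∧ ∀ z ∈ ball (0 : ℂ) 1, √√(1 - ‖z‖) * ‖deriv f z‖ ≤ K := by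
  obtain ⟨hd, C, hC⟩ := hf
  have hC0 : 0 ≤ C := (mul_nonneg (by simp) (norm_nonneg _)).trans (hC 0 (mem_ball_self one_pos))
  have hd' : DifferentiableOn ℂ (deriv f) (ball 0 1) :=
    (hd.analyticOnNhd isOpen_ball).deriv.differentiableOn
  have hC' : ∀ w ∈ ball (0 : ℂ) 1, (1 - ‖w‖) * ‖deriv (deriv f) w‖ ≤ C := fun w hw => by
    have hw1 : ‖w‖ < 1 := mem_ball_zero_iff.mp hw
    refine le_trans ?_ (hC w hw)
    gcongr
    nlinarith [norm_nonneg w]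
  refine ⟨‖deriv f 0‖ + 4 * C, by positivity, fun z hz => ?_⟩
  have hgrowth := norm_sub_le_mul_neg_log_of_norm_deriv_le hd' hC' hz
  have hu0 : 0 ≤ √√(1 - ‖z‖) := Real.sqrt_nonneg _
  have hu1 : √√(1 - ‖z‖) ≤ 1 := by
    rw [Real.sqrt_le_one, Real.sqrt_le_one]; linarith [norm_nonneg z]
  have hlog := sqrt_sqrt_mul_neg_log_le (1 - ‖z‖)
  have htri : ‖deriv f z‖ ≤ ‖deriv f 0‖ + C * -Real.log (1 - ‖z‖) := by
    linarith [norm_le_norm_add_norm_sub' (deriv f z) (deriv f 0)]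
  nlinarith [mul_le_mul_of_nonneg_left htri hu0, mul_le_mul_of_nonneg_left hlog hC0,
    mul_le_mul_of_nonneg_right hu1 (norm_nonneg (deriv f 0))]

/-- `littleBZ ψ` is this condition for `(1 - ‖z‖²) ‖ψ″ z‖`, and so is the second half of the
conclusion of `dLambda_mem_littleAZ` for `(1 - ‖z‖²) ‖ψ″ z - φ′ z ψ′ z‖`. -/
def VanishesNearUnitCircle (g : ℂ → ℝ) : Prop :=
  ∀ ε : ℝ, 0 < ε → ∃ t : ℝ, 0 < t ∧ ∀ z : ℂ, 1 - t < ‖z‖ → ‖z‖ < 1 → g z ≤ ε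

theorem VanishesNearUnitCircle.of_le_add {f g h : ℂ → ℝ} (hf : VanishesNearUnitCircle f)
    (hg : VanishesNearUnitCircle g) (hle : ∀ z : ℂ, ‖z‖ < 1 → h z ≤ f z + g z) :
    VanishesNearUnitCircle h := fun ε hε => by
  obtain ⟨t₁, ht₁, hf⟩ := hf (ε / 2) (half_pos hε)
  obtain ⟨t₂, ht₂, hg⟩ := hg (ε / 2) (half_pos hε)
  refine ⟨min t₁ t₂, lt_min ht₁ ht₂, fun z hz hz1 => ?_⟩
  have h₁ := hf z (by linarith [min_le_left t₁ t₂]) hz1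
  have h₂ := hg z (by linarith [min_le_right t₁ t₂]) hz1
  linarith [hle z hz1]

theorem vanishesNearUnitCircle_sqrt_one_sub_norm_mul (c : ℝ) :
    VanishesNearUnitCircle fun z => √(1 - ‖z‖) * c := fun ε hε => by
  have hc : 0 < |c| + 1 := by positivity
  refine ⟨(ε / (|c| + 1)) ^ 2, by positivity, fun z hz _ => ?_⟩
  have hsqrt : √(1 - ‖z‖) ≤ ε / (|c| + 1) :=
    (Real.sqrt_le_left (by positivity)).2 (by linarith)
  calc √(1 - ‖z‖) * c ≤ ε / (|c| + 1) * |c| :=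
        (mul_le_mul_of_nonneg_left (le_abs_self c) (Real.sqrt_nonneg _)).trans
          (mul_le_mul_of_nonneg_right hsqrt (abs_nonneg c))
    _ ≤ ε := by
        rw [div_mul_eq_mul_div, div_le_iff₀ hc]; nlinarith [abs_nonneg c]

/-- if `φ ∈ B^Z(𝔻)` and `ψ ∈ B^Z_0(𝔻)`, then
`d_φΛ(ψ) = ψ″ − φ′ψ′` belongs to `A^Z_0(𝔻)`. -/
theorem dLambda_mem_littleAZ (φ ψ : ℂ → ℂ)
    (hφ : memBZ φ) (hψ : memBZ ψ) (hψ0 : littleBZ ψ) :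
    (∃ C : ℝ, ∀ z ∈ ball (0:ℂ) 1,
      (1 - ‖z‖ ^ 2) *
        ‖deriv (deriv ψ) z - deriv φ z * deriv ψ z‖ ≤ C) ∧
    (∀ ε : ℝ, 0 < ε → ∃ t : ℝ, 0 < t ∧ ∀ z : ℂ,
      1 - t < ‖z‖ → ‖z‖ < 1 →
        (1 - ‖z‖ ^ 2) *
          ‖deriv (deriv ψ) z - deriv φ z * deriv ψ z‖ ≤ ε) := by
  obtain ⟨Kφ, hKφ, hφ'⟩ := hφ.exists_sqrt_sqrt_mul_norm_deriv_le
  obtain ⟨Kψ, hKψ, hψ'⟩ := hψ.exists_sqrt_sqrt_mul_norm_deriv_le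
  obtain ⟨-, Cψ, hCψ⟩ := hψ
  have key : ∀ z ∈ ball (0 : ℂ) 1,
      (1 - ‖z‖ ^ 2) * ‖deriv (deriv ψ) z - deriv φ z * deriv ψ z‖ ≤
        (1 - ‖z‖ ^ 2) * ‖deriv (deriv ψ) z‖ + √(1 - ‖z‖) * (2 * (Kφ * Kψ)) := fun z hz =>
    one_sub_sq_mul_norm_sub_mul_le (norm_nonneg z) (mem_ball_zero_iff.mp hz).le
      (hφ' z hz) (hψ' z hz)
  refine ⟨⟨Cψ + 2 * (Kφ * Kψ), fun z hz => ?_⟩, ?_⟩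
  · have hs : √(1 - ‖z‖) ≤ 1 := Real.sqrt_le_one.mpr (by linarith [norm_nonneg z])
    nlinarith [key z hz, hCψ z hz, mul_nonneg hKφ hKψ]
  · exact VanishesNearUnitCircle.of_le_add hψ0 (vanishesNearUnitCircle_sqrt_one_sub_norm_mul _)
      fun z hz => key z (mem_ball_zero_iff.mpr hz)
end

section
/- There is an absolute constant C > 0 with the following property. For every ν ∈ L^Z(𝔻*), the function φ(z) = ∫_{𝔻*} ν(w)/(w − z)⁴ dA(w) (with dA two-dimensional Lebesgue measure) is well-defined and holomorphic on 𝔻 = {|z| < 1}, and satisfies sup_{|z|<1} (1−|z|²)|φ(z)| ≤ C·‖ν‖_Z; that is, φ ∈ A^Z(𝔻). -/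
/-!
For `|z| < 1 < |w|` the hypothesis gives `|ν(w)| ≤ 3N(|w| - 1) ≤ 3N|w - z|`, so the kernel
`ν(w)/(w - z)⁴` is dominated by `3N / max(|w - z|, 1 - |z|)³`. Rescaling `u ↦ d • u` shows that
`∫_ℂ max(|u|, d)⁻³ dA(u)` is `1/d` times its (finite, positive) value at `d = 1`; with
`d = 1 - |z|` this gives `|φ(z)| ≲ N / (1 - |z|)`, i.e. the `A^Z` bound. For `z` near a point of
`𝔻` the same kind of majorant dominates the `z`-derivative of the kernel, so `φ` may be
differentiated under the integral sign.
-/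

open MeasureTheory Metric

/-- The exterior disk `𝔻* = {z : |z| > 1}`. -/
def extDisk : Set ℂ := {z : ℂ | 1 < ‖z‖}

open Module

section InvMaxNormPow

variable {E : Type*} [NormedAddCommGroup E] [NormedSpace ℝ E]

theorem inv_max_norm_pow_eq_inv_pow_mul {d : ℝ} (hd : 0 < d) (k : ℕ) (u : E) :
    (max ‖u‖ d ^ k)⁻¹ = (d ^ k)⁻¹ * (max ‖d⁻¹ • u‖ 1 ^ k)⁻¹ := by
  rw [← mul_inv, ← mul_pow, mul_max_of_nonneg _ _ hd.le, norm_smul, Real.norm_of_nonneg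
    (inv_nonneg.2 hd.le), mul_inv_cancel_left₀ hd.ne', mul_one]

variable [FiniteDimensional ℝ E] [MeasurableSpace E] [BorelSpace E] (μ : Measure E)
  [μ.IsAddHaarMeasure]

theorem integrable_inv_max_norm_one_pow {k : ℕ} (hk : finrank ℝ E < k) :
    Integrable (fun u : E => (max ‖u‖ 1 ^ k)⁻¹) μ := by
  refine ((integrable_one_add_norm (μ := μ) (r := k) (by exact_mod_cast hk)).const_mul
    (2 ^ k)).mono' (by fun_prop) (Filter.Eventually.of_forall fun u => ?_)
  have hmax : 0 < max ‖u‖ 1 := lt_max_of_lt_right one_pos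
  rw [Real.norm_of_nonneg (by positivity), Real.rpow_neg (by positivity), Real.rpow_natCast,
    ← div_eq_mul_inv, le_div_iff₀ (by positivity), ← div_eq_inv_mul,
    div_le_iff₀ (by positivity), ← mul_pow]
  gcongr
  linarith [le_max_left ‖u‖ 1, le_max_right ‖u‖ 1]

theorem integrable_inv_max_norm_pow {k : ℕ} (hk : finrank ℝ E < k) {d : ℝ} (hd : 0 < d) :
    Integrable (fun u : E => (max ‖u‖ d ^ k)⁻¹) μ := by
  simp_rw [inv_max_norm_pow_eq_inv_pow_mul hd]
  exact ((integrable_inv_max_norm_one_pow μ hk).comp_smul (inv_ne_zero hd.ne')).const_mul _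

theorem integral_inv_max_norm_pow {d : ℝ} (hd : 0 < d) (k : ℕ) :
    ∫ u, (max ‖u‖ d ^ k)⁻¹ ∂μ = d ^ finrank ℝ E / d ^ k * ∫ u, (max ‖u‖ 1 ^ k)⁻¹ ∂μ := by
  simp_rw [inv_max_norm_pow_eq_inv_pow_mul hd, integral_const_mul,
    Measure.integral_comp_smul μ (fun u => (max ‖u‖ 1 ^ k)⁻¹), inv_pow, inv_inv,
    abs_of_pos (pow_pos hd _), smul_eq_mul]
  ring

theorem integral_inv_max_norm_one_pow_pos {k : ℕ} (hk : finrank ℝ E < k) :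
    0 < ∫ u, (max ‖u‖ 1 ^ k)⁻¹ ∂μ := by
  refine (integral_pos_iff_support_of_nonneg (fun u => by positivity)
    (integrable_inv_max_norm_one_pow μ hk)).2 ?_
  rw [Function.support_eq_univ fun u => by positivity]
  exact μ.measure_univ_pos.2 (NeZero.ne μ)

end InvMaxNormPow

theorem le_three_mul_sub_one_of_max_inv_mul_le {a m N : ℝ} (ha : 1 < a) (hm : 0 ≤ m)
    (h : max ((a ^ 2 - 1)⁻¹) 1 * m ≤ N) : m ≤ 3 * N * (a - 1) := by
  have hm_le : m ≤ N := (le_mul_of_one_le_left hm (le_max_right _ _)).trans h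
  have hm_le' : m ≤ N * (a ^ 2 - 1) := by
    have := (mul_le_mul_of_nonneg_right (le_max_left ((a ^ 2 - 1)⁻¹) 1) hm).trans h
    rwa [inv_mul_le_iff₀ (by nlinarith), mul_comm] at this
  rcases le_or_gt (4 / 3) a with ha' | ha' <;> nlinarith

theorem inv_norm_sub_pow_le_two_pow_mul {E : Type*} [SeminormedAddCommGroup E] {w z z₀ : E}
    {ε : ℝ} (hε : 0 < ε) (hz : ‖z - z₀‖ < ε) (hw : ε ≤ ‖w - z‖) (n : ℕ) :
    (‖w - z‖ ^ n)⁻¹ ≤ 2 ^ n * (max ‖w - z₀‖ ε ^ n)⁻¹ := by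
  have hmax : max ‖w - z₀‖ ε ≤ 2 * ‖w - z‖ :=
    max_le (by linarith [norm_sub_le_norm_sub_add_norm_sub w z z₀]) (by linarith)
  have hpos : 0 < ‖w - z‖ := hε.trans_le hw
  rw [← div_eq_mul_inv, le_div_iff₀ (by positivity), inv_mul_le_iff₀ (by positivity), ← mul_pow]
  exact pow_le_pow_left₀ (by positivity) (hmax.trans_eq (mul_comm _ _)) n

theorem hasDerivAt_div_sub_pow (c : ℂ) {w z : ℂ} (h : w ≠ z) (n : ℕ) :
    HasDerivAt (fun z => c / (w - z) ^ n) (n * c / (w - z) ^ (n + 1)) z := by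
  have hwz : w - z ≠ 0 := sub_ne_zero.2 h
  have h1 := (((hasDerivAt_id' z).const_sub w).fun_pow n).fun_inv (pow_ne_zero n hwz)
  have h2 := h1.const_mul c
  simp only [← div_eq_mul_inv] at h2
  refine h2.congr_deriv ?_
  rcases n with _ | n
  · simp
  · rw [Nat.add_sub_cancel]
    field_simp
    ring

theorem norm_div_sub_pow_succ_le {c w z : ℂ} {N : ℝ} (hz : ‖z‖ < 1) (hw : 1 < ‖w‖)
    (hc : ‖c‖ ≤ N * (‖w‖ - 1)) (k : ℕ) :
    ‖c / (w - z) ^ (k + 1)‖ ≤ N * (‖w - z‖ ^ k)⁻¹ := by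
  have hwz : ‖w‖ - 1 ≤ ‖w - z‖ := by linarith [norm_sub_norm_le w z]
  have hN : 0 ≤ N := nonneg_of_mul_nonneg_left ((norm_nonneg c).trans hc) (by linarith)
  have hpos : 0 < ‖w - z‖ := by linarith
  calc ‖c / (w - z) ^ (k + 1)‖ = ‖c‖ / ‖w - z‖ ^ (k + 1) := by rw [norm_div, norm_pow]
    _ ≤ N * ‖w - z‖ / ‖w - z‖ ^ (k + 1) := by gcongr; exact hc.trans (by gcongr)
    _ = N * (‖w - z‖ ^ k)⁻¹ := by field_simp; ring

theorem isOpen_extDisk : IsOpen extDisk :=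
  isOpen_lt continuous_const continuous_norm

theorem measurableSet_extDisk : MeasurableSet extDisk :=
  isOpen_extDisk.measurableSet

theorem integrable_inv_max_norm_sub_pow {k : ℕ} (hk : 2 < k) (z : ℂ) {d : ℝ} (hd : 0 < d) :
    Integrable (fun w : ℂ => (max ‖w - z‖ d ^ k)⁻¹) :=
  (integrable_inv_max_norm_pow volume (by rwa [Complex.finrank_real_complex]) hd).comp_sub_right z

section ExtDiskIntegral

variable {ν : ℂ → ℂ} {N : ℝ}

theorem nonneg_of_ae_norm_le_mul_sub_one
    (hν : ∀ᵐ w ∂volume.restrict extDisk, ‖ν w‖ ≤ N * (‖w‖ - 1)) : 0 ≤ N := by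
  have : (ae (volume.restrict extDisk)).NeBot :=
    ae_restrict_neBot.2 (isOpen_extDisk.measure_ne_zero volume ⟨2, by simp [extDisk]⟩)
  obtain ⟨w, hνw, hw⟩ := (hν.and (ae_restrict_mem measurableSet_extDisk)).exists
  exact nonneg_of_mul_nonneg_left ((norm_nonneg _).trans hνw) (sub_pos.2 hw)

theorem ae_norm_div_sub_pow_succ_le
    (hν : ∀ᵐ w ∂volume.restrict extDisk, ‖ν w‖ ≤ N * (‖w‖ - 1)) {z : ℂ} (hz : ‖z‖ < 1) (k : ℕ) :
    ∀ᵐ w ∂volume.restrict extDisk,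
      ‖ν w / (w - z) ^ (k + 1)‖ ≤ N * (max ‖w - z‖ (1 - ‖z‖) ^ k)⁻¹ := by
  filter_upwards [hν, ae_restrict_mem measurableSet_extDisk] with w hνw hw
  rw [max_eq_left (by linarith [norm_sub_norm_le w z, show 1 < ‖w‖ from hw])]
  exact norm_div_sub_pow_succ_le hz hw hνw k

theorem integrableOn_div_sub_pow_succ (hν_meas : Measurable ν)
    (hν : ∀ᵐ w ∂volume.restrict extDisk, ‖ν w‖ ≤ N * (‖w‖ - 1)) {k : ℕ} (hk : 2 < k) {z : ℂ}
    (hz : ‖z‖ < 1) : IntegrableOn (fun w => ν w / (w - z) ^ (k + 1)) extDisk :=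
  ((integrable_inv_max_norm_sub_pow hk z (sub_pos.2 hz)).const_mul N).restrict.mono'
    (hν_meas.div (by fun_prop)).aestronglyMeasurable (ae_norm_div_sub_pow_succ_le hν hz k)

theorem norm_integral_div_sub_pow_succ_le
    (hν : ∀ᵐ w ∂volume.restrict extDisk, ‖ν w‖ ≤ N * (‖w‖ - 1)) {k : ℕ} (hk : 2 < k) {z : ℂ}
    (hz : ‖z‖ < 1) :
    ‖∫ w in extDisk, ν w / (w - z) ^ (k + 1)‖ ≤
      N * ((1 - ‖z‖) ^ 2 / (1 - ‖z‖) ^ k * ∫ u : ℂ, (max ‖u‖ 1 ^ k)⁻¹) := by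
  have hd : 0 < 1 - ‖z‖ := sub_pos.2 hz
  have hN := nonneg_of_ae_norm_le_mul_sub_one hν
  have hmaj := (integrable_inv_max_norm_sub_pow hk z hd).const_mul N
  calc ‖∫ w in extDisk, ν w / (w - z) ^ (k + 1)‖
      ≤ ∫ w in extDisk, N * (max ‖w - z‖ (1 - ‖z‖) ^ k)⁻¹ :=
        norm_integral_le_of_norm_le hmaj.restrict (ae_norm_div_sub_pow_succ_le hν hz k)
    _ ≤ ∫ w, N * (max ‖w - z‖ (1 - ‖z‖) ^ k)⁻¹ :=
        setIntegral_le_integral hmaj (.of_forall fun w => by positivity)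
    _ = N * ∫ u : ℂ, (max ‖u‖ (1 - ‖z‖) ^ k)⁻¹ := by
        rw [integral_const_mul, integral_sub_right_eq_self (fun u : ℂ => (max ‖u‖ _ ^ k)⁻¹)]
    _ = N * ((1 - ‖z‖) ^ 2 / (1 - ‖z‖) ^ k * ∫ u : ℂ, (max ‖u‖ 1 ^ k)⁻¹) := by
        rw [integral_inv_max_norm_pow volume hd k, Complex.finrank_real_complex]

theorem differentiableOn_integral_div_sub_pow_succ (hν_meas : Measurable ν)
    (hν : ∀ᵐ w ∂volume.restrict extDisk, ‖ν w‖ ≤ N * (‖w‖ - 1)) {k : ℕ} (hk : 2 < k) :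
    DifferentiableOn ℂ (fun z => ∫ w in extDisk, ν w / (w - z) ^ (k + 1)) (ball 0 1) := by
  intro z₀ hz₀
  rw [mem_ball_zero_iff] at hz₀
  set ε := (1 - ‖z₀‖) / 2 with hε_def
  have hε : 0 < ε := half_pos (sub_pos.2 hz₀)
  have hN := nonneg_of_ae_norm_le_mul_sub_one hν
  have hball : ∀ z ∈ ball z₀ ε, ‖z‖ < 1 - ε := fun z hz => by
    rw [mem_ball_iff_norm] at hz
    linarith [norm_le_norm_add_norm_sub' z z₀]
  have h_bound : ∀ᵐ w ∂volume.restrict extDisk, ∀ z ∈ ball z₀ ε,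
      ‖((k + 1 : ℕ) : ℂ) * ν w / (w - z) ^ (k + 1 + 1)‖ ≤
        (k + 1) * (N * (2 ^ (k + 1) * (max ‖w - z₀‖ ε ^ (k + 1))⁻¹)) := by
    filter_upwards [hν, ae_restrict_mem measurableSet_extDisk] with w hνw hw z hz
    have hwz : ε ≤ ‖w - z‖ := by
      linarith [norm_sub_norm_le w z, show 1 < ‖w‖ from hw, hball z hz]
    calc ‖((k + 1 : ℕ) : ℂ) * ν w / (w - z) ^ (k + 1 + 1)‖
        = (k + 1) * ‖ν w / (w - z) ^ (k + 1 + 1)‖ := by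
          rw [mul_div_assoc, norm_mul]; norm_cast
      _ ≤ (k + 1) * (N * (‖w - z‖ ^ (k + 1))⁻¹) := by
          gcongr; exact norm_div_sub_pow_succ_le ((hball z hz).trans (by linarith)) hw hνw (k + 1)
      _ ≤ (k + 1) * (N * (2 ^ (k + 1) * (max ‖w - z₀‖ ε ^ (k + 1))⁻¹)) := by
          gcongr; exact inv_norm_sub_pow_le_two_pow_mul hε (mem_ball_iff_norm.1 hz) hwz (k + 1)
  have h_bound_int : Integrable
      (fun w => (k + 1) * (N * (2 ^ (k + 1) * (max ‖w - z₀‖ ε ^ (k + 1))⁻¹)))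
      (volume.restrict extDisk) :=
    ((integrable_inv_max_norm_sub_pow (by omega) z₀ hε).const_mul _ |>.const_mul _
      |>.const_mul _).restrict
  have h_diff : ∀ᵐ w ∂volume.restrict extDisk, ∀ z ∈ ball z₀ ε,
      HasDerivAt (fun z => ν w / (w - z) ^ (k + 1))
        (((k + 1 : ℕ) : ℂ) * ν w / (w - z) ^ (k + 1 + 1)) z := by
    filter_upwards [ae_restrict_mem measurableSet_extDisk] with w hw z hz
    refine hasDerivAt_div_sub_pow (ν w) (fun h => ?_) (k + 1)
    have : 1 < ‖w‖ := hw
    linarith [hball z hz, h ▸ this]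
  obtain ⟨-, hderiv⟩ := hasDerivAt_integral_of_dominated_loc_of_deriv_le
    (F := fun z w => ν w / (w - z) ^ (k + 1)) (ball_mem_nhds z₀ hε)
    (.of_forall fun z => (hν_meas.div (by fun_prop)).aestronglyMeasurable)
    (integrableOn_div_sub_pow_succ hν_meas hν hk hz₀)
    ((hν_meas.const_mul _).div (by fun_prop)).aestronglyMeasurable h_bound h_bound_int h_diff
  exact hderiv.differentiableAt.differentiableWithinAt

end ExtDiskIntegral

/-- there is an absolute constant `C > 0` such that for every
`ν ∈ L^Z(𝔻*)` (measurable with `max((|w|²−1)⁻¹,1)|ν(w)| ≤ N` a.e. on `𝔻*`),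
the function `φ(z) = ∫_{𝔻*} ν(w)/(w−z)⁴ dA(w)` is well-defined (the integrand
is integrable) and holomorphic on `𝔻`, and satisfies
`(1−|z|²)|φ(z)| ≤ C·N` for all `z ∈ 𝔻`; that is, `φ ∈ A^Z(𝔻)`. -/
theorem integral_operator_into_AZ :
    ∃ C : ℝ, 0 < C ∧ ∀ ν : ℂ → ℂ, Measurable ν → ∀ N : ℝ,
      (∀ᵐ w : ℂ ∂volume, 1 < ‖w‖ →
        max ((‖w‖ ^ 2 - 1)⁻¹) 1 * ‖ν w‖ ≤ N) →
      (∀ z ∈ ball (0:ℂ) 1,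
        IntegrableOn (fun w => ν w / (w - z) ^ 4) extDisk volume) ∧
      DifferentiableOn ℂ
        (fun z => ∫ w in extDisk, ν w / (w - z) ^ 4) (ball (0:ℂ) 1) ∧
      ∀ z ∈ ball (0:ℂ) 1,
        (1 - ‖z‖ ^ 2) *
          ‖∫ w in extDisk, ν w / (w - z) ^ 4‖ ≤ C * N := by
  have hk : 2 < 3 := by norm_num
  set I := ∫ u : ℂ, (max ‖u‖ 1 ^ 3)⁻¹
  have hI : 0 < I :=
    integral_inv_max_norm_one_pow_pos volume (by rw [Complex.finrank_real_complex]; exact hk)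
  refine ⟨6 * I, by positivity, fun ν hν_meas N hN => ?_⟩
  have hν : ∀ᵐ w ∂volume.restrict extDisk, ‖ν w‖ ≤ 3 * N * (‖w‖ - 1) := by
    filter_upwards [ae_restrict_of_ae hN, ae_restrict_mem measurableSet_extDisk] with w hNw hw
    exact le_three_mul_sub_one_of_max_inv_mul_le hw (norm_nonneg _) (hNw hw)
  refine ⟨fun z hz => integrableOn_div_sub_pow_succ hν_meas hν hk (mem_ball_zero_iff.1 hz),
    differentiableOn_integral_div_sub_pow_succ hν_meas hν hk, fun z hz => ?_⟩
  rw [mem_ball_zero_iff] at hz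
  have hd : 0 < 1 - ‖z‖ := sub_pos.2 hz
  calc (1 - ‖z‖ ^ 2) * ‖∫ w in extDisk, ν w / (w - z) ^ 4‖
      ≤ 2 * (1 - ‖z‖) * ‖∫ w in extDisk, ν w / (w - z) ^ 4‖ := by
        gcongr; nlinarith [norm_nonneg z]
    _ ≤ 2 * (1 - ‖z‖) * (3 * N * ((1 - ‖z‖) ^ 2 / (1 - ‖z‖) ^ 3 * I)) := by
        gcongr; exact norm_integral_div_sub_pow_succ_le hν hk hz
    _ = 6 * I * N := by field_simp; ring
end
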